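/- A two-qubit state ρ_AB admits a symmetric extension if and only if ρ_AB can be written as a finite convex combination ρ_AB = Σⱼ pⱼ·ρ_AB^{(j)} (pⱼ ≥ 0, Σⱼ pⱼ = 1), where each ρ_AB^{(j)} is a two-qubit state admitting a pure symmetric extension, i.e., there is a unit vector ψⱼ ∈ ℂ²⊗ℂ²⊗ℂ² with tr_{B'}(|ψⱼ⟩⟨ψⱼ|) = tr_B(|ψⱼ⟩⟨ψⱼ|) = ρ_AB^{(j)}. -/

import Mathlib

open Matrix Kronecker Complex
open scoped ComplexOrder

abbrev Q2 : Type := Fin 2 × Fin 2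
abbrev Q3 : Type := Fin 2 × Fin 2 × Fin 2

noncomputable section

/-- A two-qubit state: positive semidefinite with trace one. -/
def IsState2 (ρ : Matrix Q2 Q2 ℂ) : Prop := ρ.PosSemidef ∧ ρ.trace = 1

/-- A three-qubit state: positive semidefinite with trace one. -/
def IsState3 (ρ : Matrix Q3 Q3 ℂ) : Prop := ρ.PosSemidef ∧ ρ.trace = 1

/-- Partial trace over the first qubit (system A) of a two-qubit operator. -/
def ptraceA (ρ : Matrix Q2 Q2 ℂ) : Matrix (Fin 2) (Fin 2) ℂ :=
  Matrix.of fun b b' => ∑ a, ρ (a, b) (a, b')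

/-- Partial trace over the middle qubit (system B) of a three-qubit operator;
the result is indexed by the systems (A, B'). -/
def ptraceB3 (ρ : Matrix Q3 Q3 ℂ) : Matrix Q2 Q2 ℂ :=
  Matrix.of fun p q => ∑ b, ρ (p.1, b, p.2) (q.1, b, q.2)

/-- Partial trace over the last qubit (system B') of a three-qubit operator;
the result is indexed by the systems (A, B). -/
def ptraceB'3 (ρ : Matrix Q3 Q3 ℂ) : Matrix Q2 Q2 ℂ :=
  Matrix.of fun p q => ∑ c, ρ (p.1, p.2, c) (q.1, q.2, c)

/-- A two-qubit state admits a symmetric extension if there is a three-qubit state whose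
AB and AB' marginals both equal it. -/
def SymExt (ρ : Matrix Q2 Q2 ℂ) : Prop :=
  ∃ τ : Matrix Q3 Q3 ℂ, IsState3 τ ∧ ptraceB'3 τ = ρ ∧ ptraceB3 τ = ρ

/-- f(ρ) = tr(ρ_B²) − tr(ρ²) + 4√(det ρ). -/
def fC (ρ : Matrix Q2 Q2 ℂ) : ℝ :=
  ((ptraceA ρ * ptraceA ρ).trace).re - ((ρ * ρ).trace).re + 4 * Real.sqrt ρ.det.re

/-- The rank-one projector |ψ⟩⟨ψ|. -/
def proj {n : Type*} (ψ : n → ℂ) : Matrix n n ℂ := Matrix.vecMulVec ψ (star ψ)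

/-- A two-qubit state admits a pure symmetric extension. -/
def PureSymExt (ρ : Matrix Q2 Q2 ℂ) : Prop :=
  ∃ ψ : Q3 → ℂ, (∑ x, Complex.normSq (ψ x)) = 1 ∧
    ptraceB'3 (proj ψ) = ρ ∧ ptraceB3 (proj ψ) = ρ

/-- The multiset of nonzero eigenvalues (with multiplicity) of a complex matrix. -/
def nonzeroSpec {n : Type*} [Fintype n] [DecidableEq n] (M : Matrix n n ℂ) : Multiset ℂ :=
  M.charpoly.roots.filter (· ≠ 0)

/-- The trace norm ‖X‖_tr = tr √(X†X) of a 2×2 complex matrix. -/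
def trNorm (X : Matrix (Fin 2) (Fin 2) ℂ) : ℝ :=
  (((Matrix.posSemidef_conjTranspose_mul_self X).1.eigenvectorUnitary.1 *
      diagonal (((↑) : ℝ → ℂ) ∘ Real.sqrt ∘ (Matrix.posSemidef_conjTranspose_mul_self X).1.eigenvalues) *
      (star (Matrix.posSemidef_conjTranspose_mul_self X).1.eigenvectorUnitary :
        Matrix (Fin 2) (Fin 2) ℂ)).trace).re

/-- The supporting-hyperplane observable H_AB(σ) = √(det σ)·σ⁻¹ − σ + I₂⊗σ_B. -/
def HAB (σ : Matrix Q2 Q2 ℂ) : Matrix Q2 Q2 ℂ :=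
  ((Real.sqrt σ.det.re : ℝ) : ℂ) • σ⁻¹ - σ + (1 : Matrix (Fin 2) (Fin 2) ℂ) ⊗ₖ ptraceA σ

/-! Symmetrizing an extension over the swap B ↔ B' keeps both of its marginals. Write the
symmetrized extension as a sum of rank-one terms |v⟩⟨v| and split each v into its symmetric and
antisymmetric parts under the swap: by the parallelogram law the cross terms cancel, and each part
is, after normalization, a pure symmetric extension of its own AB-marginal. Conversely, a mixture
of symmetric extensions is a symmetric extension of the mixture. -/

section Proj

variable {n : Type*}

lemma proj_smul (c : ℂ) (v : n → ℂ) : proj (c • v) = (c * star c) • proj v := by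
  rw [proj, star_smul, smul_vecMulVec, vecMulVec_smul, smul_smul, proj]

lemma proj_neg (v : n → ℂ) : proj (-v) = proj v := by
  simp [proj]

lemma proj_comp {m : Type*} (v : n → ℂ) (e : m → n) : proj (v ∘ e) = (proj v).submatrix e e :=
  rfl

lemma proj_add_add_proj_sub (a b : n → ℂ) :
    proj (a + b) + proj (a - b) = (2 : ℂ) • (proj a + proj b) := by
  ext i j
  simp only [proj, Matrix.add_apply, Matrix.smul_apply, vecMulVec_apply, Pi.add_apply,
    Pi.sub_apply, Pi.star_apply, star_add, star_sub, smul_eq_mul]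
  ring

lemma trace_proj [Fintype n] (v : n → ℂ) :
    (proj v).trace = ((∑ x, Complex.normSq (v x) : ℝ) : ℂ) := by
  simp [proj, dotProduct, Complex.mul_conj]

end Proj

def swapBB' : Q3 ≃ Q3 := Equiv.prodCongr (Equiv.refl _) (Equiv.prodComm _ _)

@[simp] lemma swapBB'_swapBB' (x : Q3) : swapBB' (swapBB' x) = x :=
  rfl

lemma ptraceB3_eq_ptraceB'3_submatrix (X : Matrix Q3 Q3 ℂ) :
    ptraceB3 X = ptraceB'3 (X.submatrix swapBB' swapBB') :=
  rfl

def ptraceB'3LinearMap : Matrix Q3 Q3 ℂ →ₗ[ℂ] Matrix Q2 Q2 ℂ where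
  toFun := ptraceB'3
  map_add' X Y := by ext; simp [ptraceB'3, Finset.sum_add_distrib]
  map_smul' c X := by ext; simp [ptraceB'3, mul_add]

def ptraceB3LinearMap : Matrix Q3 Q3 ℂ →ₗ[ℂ] Matrix Q2 Q2 ℂ where
  toFun := ptraceB3
  map_add' X Y := by ext; simp [ptraceB3, Finset.sum_add_distrib]
  map_smul' c X := by ext; simp [ptraceB3, mul_add]

lemma trace_ptraceB'3 (X : Matrix Q3 Q3 ℂ) : (ptraceB'3 X).trace = X.trace := by
  simp [Matrix.trace, ptraceB'3, Fintype.sum_prod_type]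

lemma ptraceB'3_proj (u : Q3 → ℂ) :
    ptraceB'3 (proj u) = ∑ c, proj (fun p : Q2 => u (p.1, p.2, c)) := by
  ext
  simp [ptraceB'3, proj, Matrix.sum_apply, vecMulVec_apply]

lemma isState2_ptraceB'3_proj {u : Q3 → ℂ} (hu : ∑ x, Complex.normSq (u x) = 1) :
    IsState2 (ptraceB'3 (proj u)) := by
  refine ⟨?_, by rw [trace_ptraceB'3, trace_proj, hu, Complex.ofReal_one]⟩
  rw [ptraceB'3_proj]
  exact posSemidef_sum _ fun c _ => posSemidef_vecMulVec_self_star _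

lemma pureSymExt_ptraceB'3_proj {u : Q3 → ℂ} (hu : ∑ x, Complex.normSq (u x) = 1)
    (hswap : (proj u).submatrix swapBB' swapBB' = proj u) :
    PureSymExt (ptraceB'3 (proj u)) :=
  ⟨u, hu, rfl, by rw [ptraceB3_eq_ptraceB'3_submatrix, hswap]⟩

lemma symExt_sum_smul {ι : Type*} [Fintype ι] {p : ι → ℝ} {τ : ι → Matrix Q2 Q2 ℂ}
    (hp₀ : ∀ j, 0 ≤ p j) (hp₁ : ∑ j, p j = 1) (hτ : ∀ j, PureSymExt (τ j)) :
    SymExt (∑ j, (p j : ℂ) • τ j) := by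
  choose ψ hψ hB' hB using hτ
  refine ⟨∑ j, (p j : ℂ) • proj (ψ j), ⟨?_, ?_⟩, ?_, ?_⟩
  · exact posSemidef_sum _ fun j _ =>
      (posSemidef_vecMulVec_self_star _).smul (Complex.zero_le_real.mpr (hp₀ j))
  · simp only [Matrix.trace_sum, Matrix.trace_smul, trace_proj, hψ, Complex.ofReal_one,
      smul_eq_mul, mul_one]
    exact_mod_cast hp₁
  · change ptraceB'3LinearMap _ = _
    simp only [map_sum, map_smul]
    exact Finset.sum_congr rfl fun j _ => congrArg _ (hB' j)
  · change ptraceB3LinearMap _ = _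
    simp only [map_sum, map_smul]
    exact Finset.sum_congr rfl fun j _ => congrArg _ (hB j)

def IsMixtureOfPureSymExt (ρ : Matrix Q2 Q2 ℂ) : Prop :=
  ∃ (k : ℕ) (p : Fin k → ℝ) (τ : Fin k → Matrix Q2 Q2 ℂ),
    (∀ j, 0 ≤ p j) ∧ (∑ j, p j) = 1 ∧
    (∀ j, IsState2 (τ j) ∧ PureSymExt (τ j)) ∧
    ρ = ∑ j, (p j : ℂ) • τ j

lemma exists_unit_proj_eq_smul {w : Q3 → ℂ}
    (hswap : (proj w).submatrix swapBB' swapBB' = proj w) :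
    ∃ u : Q3 → ℂ, ∑ x, Complex.normSq (u x) = 1 ∧
      (proj u).submatrix swapBB' swapBB' = proj u ∧
      proj w = ((∑ x, Complex.normSq (w x) : ℝ) : ℂ) • proj u := by
  by_cases hw : w = 0
  -- the weight is then 0, so any swap-invariant unit vector will do
  · refine ⟨Pi.single (0, 0, 0) 1, ?_, ?_, by simp [hw, proj]⟩
    · simp [Pi.single_apply, apply_ite Complex.normSq]
    · rw [← proj_comp]
      congr 1
      funext x
      simp [Pi.single_apply, swapBB', Prod.ext_iff, and_comm]
  · set N := ∑ x, Complex.normSq (w x)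
    have hN : 0 < N := by
      obtain ⟨x, hx⟩ := Function.ne_iff.mp hw
      exact (Complex.normSq_pos.mpr hx).trans_le
        (Finset.single_le_sum (fun y _ => Complex.normSq_nonneg (w y)) (Finset.mem_univ x))
    have hc : (Real.sqrt N)⁻¹ * (Real.sqrt N)⁻¹ = N⁻¹ := by
      rw [← mul_inv, Real.mul_self_sqrt hN.le]
    have hc' : (((Real.sqrt N)⁻¹ : ℝ) : ℂ) * star (((Real.sqrt N)⁻¹ : ℝ) : ℂ) =
        ((N⁻¹ : ℝ) : ℂ) := by
      rw [Complex.star_def, Complex.conj_ofReal, ← Complex.ofReal_mul, hc]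
    refine ⟨(((Real.sqrt N)⁻¹ : ℝ) : ℂ) • w, ?_, ?_, ?_⟩
    · simp only [Pi.smul_apply, smul_eq_mul, Complex.normSq_mul, Complex.normSq_ofReal,
        ← Finset.mul_sum, hc]
      exact inv_mul_cancel₀ hN.ne'
    · rw [proj_smul, hc']
      exact congrArg (((N⁻¹ : ℝ) : ℂ) • ·) hswap
    · rw [proj_smul, hc', smul_smul, ← Complex.ofReal_mul, mul_inv_cancel₀ hN.ne',
        Complex.ofReal_one, one_smul]

lemma isMixtureOfPureSymExt_of_eq_sum_ptraceB'3_proj {ι : Type*} [Fintype ι]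
    {ρ : Matrix Q2 Q2 ℂ} (w : ι → Q3 → ℂ)
    (hswap : ∀ i, (proj (w i)).submatrix swapBB' swapBB' = proj (w i))
    (hρ : ρ = ∑ i, ptraceB'3 (proj (w i))) (htr : ρ.trace = 1) :
    IsMixtureOfPureSymExt ρ := by
  choose u hu huswap hwu using fun i => exists_unit_proj_eq_smul (hswap i)
  let e := (Fintype.equivFin ι).symm
  refine ⟨Fintype.card ι, fun j => ∑ x, Complex.normSq (w (e j) x),
    fun j => ptraceB'3 (proj (u (e j))),
    fun j => Finset.sum_nonneg fun x _ => Complex.normSq_nonneg _, ?_,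
    fun j => ⟨isState2_ptraceB'3_proj (hu _), pureSymExt_ptraceB'3_proj (hu _) (huswap _)⟩, ?_⟩
  · rw [e.sum_comp fun i => ∑ x, Complex.normSq (w i x)]
    rw [hρ, Matrix.trace_sum] at htr
    simp only [trace_ptraceB'3, trace_proj] at htr
    exact_mod_cast htr
  · rw [e.sum_comp fun i => ((∑ x, Complex.normSq (w i x) : ℝ) : ℂ) • ptraceB'3 (proj (u i)), hρ]
    refine Finset.sum_congr rfl fun i _ => ?_
    rw [hwu i]
    exact map_smul ptraceB'3LinearMap _ _

def symPart (v : Q3 → ℂ) : Q3 → ℂ := (1 / 2 : ℂ) • (v + v ∘ swapBB')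

def antisymPart (v : Q3 → ℂ) : Q3 → ℂ := (1 / 2 : ℂ) • (v - v ∘ swapBB')

lemma proj_symPart_submatrix (v : Q3 → ℂ) :
    (proj (symPart v)).submatrix swapBB' swapBB' = proj (symPart v) := by
  rw [← proj_comp]
  congr 1
  funext x
  simp only [symPart, Function.comp_apply, Pi.smul_apply, Pi.add_apply, swapBB'_swapBB',
    add_comm]

lemma proj_antisymPart_submatrix (v : Q3 → ℂ) :
    (proj (antisymPart v)).submatrix swapBB' swapBB' = proj (antisymPart v) := by
  rw [← proj_comp, ← proj_neg (antisymPart v ∘ swapBB')]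
  congr 1
  funext x
  simp only [antisymPart, Function.comp_apply, Pi.smul_apply, Pi.sub_apply, Pi.neg_apply,
    swapBB'_swapBB', smul_eq_mul]
  ring

lemma proj_symPart_add_proj_antisymPart (v : Q3 → ℂ) :
    proj (symPart v) + proj (antisymPart v) =
      (1 / 2 : ℂ) • (proj v + (proj v).submatrix swapBB' swapBB') := by
  rw [symPart, antisymPart, proj_smul, proj_smul, ← smul_add, proj_add_add_proj_sub, proj_comp,
    smul_smul]
  norm_num

lemma isMixtureOfPureSymExt_of_symExt {ρ : Matrix Q2 Q2 ℂ} (h : SymExt ρ) :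
    IsMixtureOfPureSymExt ρ := by
  obtain ⟨t, ⟨ht, htr⟩, hB', hB⟩ := h
  obtain ⟨m, v, htv⟩ := Matrix.posSemidef_iff_eq_sum_vecMulVec.mp ht
  refine isMixtureOfPureSymExt_of_eq_sum_ptraceB'3_proj
    (Sum.elim (fun i => symPart (v i)) (fun i => antisymPart (v i)))
    (Sum.forall.mpr ⟨fun i => proj_symPart_submatrix _, fun i => proj_antisymPart_submatrix _⟩)
    ?_ (by rw [← hB', trace_ptraceB'3, htr])
  have hρ : ρ = (1 / 2 : ℂ) • (ptraceB'3 t + ptraceB3 t) := by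
    rw [hB', hB, ← two_smul ℂ ρ, smul_smul]
    norm_num
  calc ρ = ∑ i, (1 / 2 : ℂ) • (ptraceB'3 (proj (v i)) + ptraceB3 (proj (v i))) := by
        rw [hρ, ← Finset.smul_sum, Finset.sum_add_distrib, htv]
        congr 2
        · exact map_sum ptraceB'3LinearMap _ _
        · exact map_sum ptraceB3LinearMap _ _
    _ = ∑ i, (ptraceB'3 (proj (symPart (v i))) + ptraceB'3 (proj (antisymPart (v i)))) := by
        refine Finset.sum_congr rfl fun i _ => ?_
        change _ = ptraceB'3LinearMap _ + ptraceB'3LinearMap _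
        rw [← map_add, proj_symPart_add_proj_antisymPart, map_smul, map_add]
        rfl
    _ = _ := by
        rw [Fintype.sum_sum_type, Finset.sum_add_distrib]
        rfl

theorem symExt_iff_convex_combination_of_pure_general (ρ : Matrix Q2 Q2 ℂ) :
    SymExt ρ ↔
      ∃ (k : ℕ) (p : Fin k → ℝ) (τ : Fin k → Matrix Q2 Q2 ℂ),
        (∀ j, 0 ≤ p j) ∧ (∑ j, p j) = 1 ∧
        (∀ j, IsState2 (τ j) ∧ PureSymExt (τ j)) ∧
        ρ = ∑ j, (p j : ℂ) • τ j := by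
  refine ⟨isMixtureOfPureSymExt_of_symExt, ?_⟩
  rintro ⟨k, p, τ, hp₀, hp₁, hτ, rfl⟩
  exact symExt_sum_smul hp₀ hp₁ fun j => (hτ j).2

/-- A two-qubit state admits a symmetric extension iff it is a finite convex combination
of two-qubit states each admitting a pure symmetric extension. -/
theorem symExt_iff_convex_combination_of_pure (ρ : Matrix Q2 Q2 ℂ) (hρ : IsState2 ρ) :
    SymExt ρ ↔
      ∃ (k : ℕ) (p : Fin k → ℝ) (τ : Fin k → Matrix Q2 Q2 ℂ),
        (∀ j, 0 ≤ p j) ∧ (∑ j, p j) = 1 ∧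
        (∀ j, IsState2 (τ j) ∧ PureSymExt (τ j)) ∧
        ρ = ∑ j, (p j : ℂ) • τ j :=
  symExt_iff_convex_combination_of_pure_general ρ
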